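/- (Existence of bounded solution at threshold) Let V, b be continuous on ℝ with (1+y²)^{1/2}V and (1+y²)^{1/2}b in L^1(ℝ). Then there exists a C² function Y : ℝ → ℝ solving Y'' + b(y)Y' = V(y)Y, with Y(y) → 1 and Y'(y) → 0 as y → +∞; moreover Y satisfies the integral equation Y(y) = 1 − ∫_y^∞ (V(w)Y(w) − b(w)Y'(w))·(y−w) dw and Y'(y) = −∫_y^∞ (V(w)Y(w) − b(w)Y'(w)) dw. -/

import Mathlib

/-!
Write `U = (Y, Y')`. The two integral equations say `U = (1, 0) - T U`, where
`T U (y) = ∫_y^∞ f(w) (y - w, 1) dw` with `f = V U₁ - b U₂`, and for `w > y` both kernel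
entries are bounded by `w + 1 - y`. Put `h = |V| + |b|` and `η(y) = φ_y(y)`, where
`φ_y(w) = ∫_w^∞ (u + 1 - y) h(u) du` is finite by the moment condition. `T` is affine and
contracts by `1/2` in the norm `sup_y e^{-2η(y)} |U(y)|`. The key point is that `η(w) ≤ φ_y(w)`
for `w ≥ y`, while `(w + 1 - y) h(w) e^{2φ_y(w)}` is exactly `-∂_w (e^{2φ_y(w)} / 2)`, so
`∫_y^∞ (w + 1 - y) h(w) e^{2η(w)} dw ≤ (e^{2η(y)} - 1) / 2`.
Differentiating the equations satisfied by the fixed point gives the ODE. Since `η → 0` at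
`+∞`, the tails `T U` vanish there, which gives `Y → 1` and `Y' → 0`.
-/

open MeasureTheory Real Filter Set Topology
open scoped BoundedContinuousFunction

section TailIntegral

variable {E : Type*} [NormedAddCommGroup E] [NormedSpace ℝ E] {f : ℝ → E}

theorem hasDerivAt_integral_Ioi [CompleteSpace E] {a y : ℝ} (hf : IntegrableOn f (Ioi a))
    (hay : a < y) (hcont : ContinuousAt f y) :
    HasDerivAt (fun t => ∫ x in Ioi t, f x) (-f y) y := by
  have hii : IntervalIntegrable f volume a y :=
    (intervalIntegrable_iff_integrableOn_Ioc_of_le hay.le).2 (hf.mono_set Ioc_subset_Ioi_self)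
  have hprim := intervalIntegral.integral_hasDerivAt_right hii
    (AEStronglyMeasurable.stronglyMeasurableAtFilter_of_mem hf.aestronglyMeasurable
      (Ioi_mem_nhds hay)) hcont
  refine (hprim.const_sub (∫ x in Ioi a, f x)).congr_of_eventuallyEq ?_
  filter_upwards [Ioi_mem_nhds hay] with t ht
  rw [← intervalIntegral.integral_Ioi_sub_Ioi hf ht.le, sub_sub_cancel]

theorem continuous_integral_Ioi (hf : Integrable f) : Continuous fun t => ∫ x in Ioi t, f x :=
  continuous_iff_continuousAt.2 fun t =>
    (hf.integrableOn (s := Ioi (t - 1))).continuousOn_Ici_primitive_Ioi.continuousAt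
      (Ici_mem_nhds (sub_one_lt t))

end TailIntegral

theorem hasDerivAt_integral_Ioi_mul_sub {f : ℝ → ℝ} {a y : ℝ} (hf : IntegrableOn f (Ioi a))
    (hfk : IntegrableOn (fun w => f w * (a - w)) (Ioi a)) (hay : a < y)
    (hcont : ContinuousAt f y) :
    HasDerivAt (fun t => ∫ w in Ioi t, f w * (t - w)) (∫ w in Ioi y, f w) y := by
  have hd := (hasDerivAt_integral_Ioi hfk hay (hcont.mul (by fun_prop))).add
    (((hasDerivAt_id y).sub_const a).mul (hasDerivAt_integral_Ioi hf hay hcont))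
  refine (hd.congr_deriv (by simp only [id_eq]; ring)).congr_of_eventuallyEq ?_
  filter_upwards [Ioi_mem_nhds hay] with t ht
  simp only [Pi.add_apply, Pi.mul_apply, id]
  rw [← integral_const_mul, ← integral_add (hfk.mono_set (Ioi_subset_Ioi ht.le))
    ((hf.mono_set (Ioi_subset_Ioi ht.le)).const_mul _)]
  congr 1 with w
  ring

theorem contDiff_two_of_hasDerivAt {f f' f'' : ℝ → ℝ} (hf : ∀ y, HasDerivAt f (f' y) y)
    (hf' : ∀ y, HasDerivAt f' (f'' y) y) (hf'' : Continuous f'') : ContDiff ℝ 2 f := by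
  have hderiv : deriv f = f' := funext fun y => (hf y).deriv
  have hderiv' : deriv f' = f'' := funext fun y => (hf' y).deriv
  rw [show (2 : WithTop ℕ∞) = 1 + 1 from rfl]
  refine contDiff_succ_iff_deriv.2 ⟨fun y => (hf y).differentiableAt, by simp, ?_⟩
  rw [hderiv]
  exact contDiff_one_iff_deriv.2 ⟨fun y => (hf' y).differentiableAt, hderiv' ▸ hf''⟩

theorem one_add_abs_le_two_mul_sqrt (x : ℝ) : 1 + |x| ≤ 2 * √(1 + x ^ 2) := by
  have h1 : 1 ≤ √(1 + x ^ 2) := Real.one_le_sqrt.2 (by nlinarith)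
  have h2 : |x| ≤ √(1 + x ^ 2) := by
    rw [← Real.sqrt_sq_eq_abs]
    exact Real.sqrt_le_sqrt (by linarith)
  linarith

namespace Jost

structure AdmissibleWeight (h : ℝ → ℝ) : Prop where
  continuous : Continuous h
  nonneg : ∀ x, 0 ≤ h x
  integrable_moment : Integrable fun x => (1 + |x|) * h x

/-- `tailMoment h y w` is `φ_y(w)` and `tailMoment h y y` is `η(y)` in the notation above. -/
noncomputable def tailMoment (h : ℝ → ℝ) (y w : ℝ) : ℝ := ∫ u in Ioi w, (u + 1 - y) * h u

noncomputable def weight (h : ℝ → ℝ) (y : ℝ) : ℝ := exp (2 * tailMoment h y y)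

theorem tendsto_tailMoment_atTop (h : ℝ → ℝ) (y : ℝ) :
    Tendsto (tailMoment h y) atTop (𝓝 0) :=
  tendsto_integral_Ioi_zero tendsto_id

theorem weight_pos (h : ℝ → ℝ) (y : ℝ) : 0 < weight h y := exp_pos _

namespace AdmissibleWeight

variable {h : ℝ → ℝ}

theorem integrable_mul (hh : AdmissibleWeight h) (c : ℝ) :
    Integrable fun u => (u + 1 - c) * h u := by
  have hcont : Continuous fun u => (u + 1 - c) * h u := by
    have := hh.continuous
    fun_prop
  refine (hh.integrable_moment.const_mul (1 + |c|)).mono' hcont.aestronglyMeasurable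
    (ae_of_all _ fun u => ?_)
  have hkernel : |u + 1 - c| ≤ (1 + |c|) * (1 + |u|) := by
    rw [abs_le]
    constructor <;> nlinarith [abs_nonneg u, abs_nonneg c, le_abs_self u, neg_abs_le u,
      le_abs_self c, neg_abs_le c, mul_nonneg (abs_nonneg c) (abs_nonneg u)]
  rw [norm_mul, norm_of_nonneg (hh.nonneg u), Real.norm_eq_abs, ← mul_assoc]
  exact mul_le_mul_of_nonneg_right hkernel (hh.nonneg u)

theorem integrable (hh : AdmissibleWeight h) : Integrable h := by
  refine ((hh.integrable_mul 0).sub (hh.integrable_mul 1)).congr (ae_of_all _ fun u => ?_)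
  simp only [Pi.sub_apply]
  ring

theorem hasDerivAt_tailMoment (hh : AdmissibleWeight h) (y w : ℝ) :
    HasDerivAt (tailMoment h y) (-((w + 1 - y) * h w)) w :=
  hasDerivAt_integral_Ioi (hh.integrable_mul y).integrableOn (sub_one_lt w)
    (by have := hh.continuous; fun_prop : Continuous fun u => (u + 1 - y) * h u).continuousAt

theorem tailMoment_self_nonneg (hh : AdmissibleWeight h) (y : ℝ) : 0 ≤ tailMoment h y y :=
  setIntegral_nonneg measurableSet_Ioi fun u hu =>
    mul_nonneg (by linarith [mem_Ioi.1 hu]) (hh.nonneg u)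

theorem tailMoment_self_le (hh : AdmissibleWeight h) {y w : ℝ} (hyw : y ≤ w) :
    tailMoment h w w ≤ tailMoment h y w :=
  setIntegral_mono_on (hh.integrable_mul w).integrableOn (hh.integrable_mul y).integrableOn
    measurableSet_Ioi fun u _ => mul_le_mul_of_nonneg_right (by linarith) (hh.nonneg u)

theorem tendsto_tailMoment_self (hh : AdmissibleWeight h) :
    Tendsto (fun y => tailMoment h y y) atTop (𝓝 0) :=
  tendsto_of_tendsto_of_tendsto_of_le_of_le' tendsto_const_nhds (tendsto_tailMoment_atTop h 0)
    (Eventually.of_forall hh.tailMoment_self_nonneg)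
    ((eventually_ge_atTop 0).mono fun _ hy => hh.tailMoment_self_le hy)

theorem tailMoment_eq (hh : AdmissibleWeight h) (y w : ℝ) :
    tailMoment h y w = tailMoment h 0 w - y * ∫ u in Ioi w, h u := by
  rw [tailMoment, tailMoment, ← integral_const_mul,
    ← integral_sub (hh.integrable_mul 0).integrableOn (hh.integrable.integrableOn.const_mul y)]
  congr 1 with u
  ring

theorem continuous_weight (hh : AdmissibleWeight h) : Continuous (weight h) := by
  have hmoment : Continuous (tailMoment h 0) :=
    continuous_iff_continuousAt.2 fun w => (hh.hasDerivAt_tailMoment 0 w).continuousAt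
  have hdiag : Continuous fun y => tailMoment h y y := by
    rw [show (fun y => tailMoment h y y) = _ from funext fun y => hh.tailMoment_eq y y]
    exact hmoment.sub (continuous_id.mul (continuous_integral_Ioi hh.integrable))
  exact continuous_exp.comp (continuous_const.mul hdiag)

theorem one_le_weight (hh : AdmissibleWeight h) (y : ℝ) : 1 ≤ weight h y :=
  one_le_exp (mul_nonneg zero_le_two (hh.tailMoment_self_nonneg y))

theorem tendsto_weight (hh : AdmissibleWeight h) : Tendsto (weight h) atTop (𝓝 1) := by
  have h2 := (continuous_exp.tendsto _).comp (hh.tendsto_tailMoment_self.const_mul 2)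
  rw [mul_zero, exp_zero] at h2
  exact h2

theorem integral_kernel_mul_exp_tailMoment (hh : AdmissibleWeight h) (y : ℝ) :
    IntegrableOn (fun w => (w + 1 - y) * h w * exp (2 * tailMoment h y w)) (Ioi y) ∧
      ∫ w in Ioi y, (w + 1 - y) * h w * exp (2 * tailMoment h y w) = (weight h y - 1) / 2 := by
  have hderiv : ∀ w ∈ Ici y, HasDerivAt (fun w => -exp (2 * tailMoment h y w) / 2)
      ((w + 1 - y) * h w * exp (2 * tailMoment h y w)) w := fun w _ => by
    refine (((hh.hasDerivAt_tailMoment y w).const_mul 2).exp.neg.div_const 2).congr_deriv ?_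
    ring
  have hpos : ∀ w ∈ Ioi y, 0 ≤ (w + 1 - y) * h w * exp (2 * tailMoment h y w) := fun w hw =>
    mul_nonneg (mul_nonneg (by linarith [mem_Ioi.1 hw]) (hh.nonneg w)) (exp_nonneg _)
  have hlim : Tendsto (fun w => -exp (2 * tailMoment h y w) / 2) atTop (𝓝 (-1 / 2)) := by
    simpa using
      ((continuous_exp.tendsto _).comp ((tendsto_tailMoment_atTop h y).const_mul 2)).neg.div_const 2
  refine ⟨integrableOn_Ioi_deriv_of_nonneg' hderiv hpos hlim, ?_⟩
  rw [integral_Ioi_of_hasDerivAt_of_nonneg' hderiv hpos hlim, weight]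
  ring

theorem integrableOn_and_abs_integral_le (hh : AdmissibleWeight h) {f k : ℝ → ℝ} {r y : ℝ}
    (hf : Continuous f) (hk : Continuous k) (hr : 0 ≤ r)
    (hfb : ∀ w, |f w| ≤ r * (h w * weight h w)) (hkb : ∀ w > y, |k w| ≤ w + 1 - y) :
    IntegrableOn (fun w => f w * k w) (Ioi y) ∧
      |∫ w in Ioi y, f w * k w| ≤ r * ((weight h y - 1) / 2) := by
  obtain ⟨hint, hval⟩ := hh.integral_kernel_mul_exp_tailMoment y
  have hbound : ∀ w ∈ Ioi y,
      ‖f w * k w‖ ≤ r * ((w + 1 - y) * h w * exp (2 * tailMoment h y w)) := fun w hw => by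
    have hweight : weight h w ≤ exp (2 * tailMoment h y w) :=
      exp_le_exp.2 (by linarith [hh.tailMoment_self_le (le_of_lt hw)])
    rw [Real.norm_eq_abs, abs_mul]
    calc |f w| * |k w| ≤ r * (h w * weight h w) * (w + 1 - y) :=
          mul_le_mul (hfb w) (hkb w hw) (abs_nonneg _)
            (mul_nonneg hr (mul_nonneg (hh.nonneg w) (weight_pos h w).le))
      _ = r * ((w + 1 - y) * h w * weight h w) := by ring
      _ ≤ r * ((w + 1 - y) * h w * exp (2 * tailMoment h y w)) :=
          mul_le_mul_of_nonneg_left (mul_le_mul_of_nonneg_left hweight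
            (mul_nonneg (by linarith [mem_Ioi.1 hw]) (hh.nonneg w))) hr
  have hae := (ae_restrict_iff' (μ := volume) measurableSet_Ioi).2 (ae_of_all _ hbound)
  refine ⟨(hint.const_mul r).mono' (hf.mul hk).aestronglyMeasurable hae, ?_⟩
  rw [← hval, ← integral_const_mul, ← Real.norm_eq_abs]
  exact norm_integral_le_of_norm_le (hint.const_mul r) hae

end AdmissibleWeight


noncomputable def volterraTail (f : ℝ → ℝ) (y : ℝ) : ℝ × ℝ :=
  (∫ w in Ioi y, f w * (y - w), ∫ w in Ioi y, f w)

structure TailIntegrable (f : ℝ → ℝ) : Prop where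
  integrableOn : ∀ a, IntegrableOn f (Ioi a)
  integrableOn_mul_sub : ∀ a, IntegrableOn (fun w => f w * (a - w)) (Ioi a)

namespace TailIntegrable

variable {f g : ℝ → ℝ}

theorem hasDerivAt_volterraTail_fst (hf : TailIntegrable f) {y : ℝ} (hc : ContinuousAt f y) :
    HasDerivAt (fun t => (volterraTail f t).1) (volterraTail f y).2 y :=
  hasDerivAt_integral_Ioi_mul_sub (hf.integrableOn (y - 1)) (hf.integrableOn_mul_sub (y - 1))
    (sub_one_lt y) hc

theorem hasDerivAt_volterraTail_snd (hf : TailIntegrable f) {y : ℝ} (hc : ContinuousAt f y) :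
    HasDerivAt (fun t => (volterraTail f t).2) (-f y) y :=
  hasDerivAt_integral_Ioi (hf.integrableOn (y - 1)) (sub_one_lt y) hc

theorem continuous_volterraTail (hf : TailIntegrable f) (hc : Continuous f) :
    Continuous (volterraTail f) :=
  continuous_iff_continuousAt.2 fun _ =>
    (hf.hasDerivAt_volterraTail_fst hc.continuousAt).continuousAt.prodMk
      (hf.hasDerivAt_volterraTail_snd hc.continuousAt).continuousAt

theorem volterraTail_sub (hf : TailIntegrable f) (hg : TailIntegrable g) (y : ℝ) :
    volterraTail (f - g) y = volterraTail f y - volterraTail g y := by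
  simp only [volterraTail, Pi.sub_apply, sub_mul, Prod.mk_sub_mk]
  rw [integral_sub (hf.integrableOn_mul_sub y) (hg.integrableOn_mul_sub y),
    integral_sub (hf.integrableOn y) (hg.integrableOn y)]

end TailIntegrable

def rhs (V b : ℝ → ℝ) (U : ℝ → ℝ × ℝ) (w : ℝ) : ℝ := V w * (U w).1 - b w * (U w).2

theorem continuous_rhs {V b : ℝ → ℝ} {U : ℝ → ℝ × ℝ} (hV : Continuous V) (hb : Continuous b)
    (hU : Continuous U) : Continuous (rhs V b U) :=
  (hV.mul hU.fst).sub (hb.mul hU.snd)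

theorem rhs_sub (V b : ℝ → ℝ) (U U' : ℝ → ℝ × ℝ) : rhs V b (U - U') = rhs V b U - rhs V b U' := by
  ext w
  simp only [rhs, Pi.sub_apply, Prod.fst_sub, Prod.snd_sub]
  ring

structure IsVolterraSolution (V b : ℝ → ℝ) (U : ℝ → ℝ × ℝ) : Prop where
  continuous : Continuous U
  tailIntegrable : TailIntegrable (rhs V b U)
  eq_volterraTail : ∀ y, U y = (1, 0) - volterraTail (rhs V b U) y
  tendsto_volterraTail : Tendsto (volterraTail (rhs V b U)) atTop (𝓝 0)

namespace IsVolterraSolution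

variable {V b : ℝ → ℝ} {U : ℝ → ℝ × ℝ}

theorem fst_eq (hU : IsVolterraSolution V b U) (y : ℝ) :
    (U y).1 = 1 - (volterraTail (rhs V b U) y).1 := by
  rw [hU.eq_volterraTail y]
  rfl

theorem snd_eq (hU : IsVolterraSolution V b U) (y : ℝ) :
    (U y).2 = -(volterraTail (rhs V b U) y).2 := by
  rw [hU.eq_volterraTail y]
  simp

theorem hasDerivAt_fst (hU : IsVolterraSolution V b U) (hV : Continuous V) (hb : Continuous b)
    (y : ℝ) : HasDerivAt (fun t => (U t).1) (U y).2 y := by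
  rw [funext hU.fst_eq, hU.snd_eq]
  exact (hU.tailIntegrable.hasDerivAt_volterraTail_fst
    (continuous_rhs hV hb hU.continuous).continuousAt).const_sub 1

theorem hasDerivAt_snd (hU : IsVolterraSolution V b U) (hV : Continuous V) (hb : Continuous b)
    (y : ℝ) : HasDerivAt (fun t => (U t).2) (rhs V b U y) y := by
  rw [funext hU.snd_eq, ← neg_neg (rhs V b U y)]
  exact (hU.tailIntegrable.hasDerivAt_volterraTail_snd
    (continuous_rhs hV hb hU.continuous).continuousAt).neg

theorem tendsto_fst (hU : IsVolterraSolution V b U) : Tendsto (fun y => (U y).1) atTop (𝓝 1) := by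
  simpa [hU.fst_eq] using (hU.tendsto_volterraTail.fst_nhds).const_sub 1

theorem tendsto_snd (hU : IsVolterraSolution V b U) : Tendsto (fun y => (U y).2) atTop (𝓝 0) := by
  simpa [hU.snd_eq] using hU.tendsto_volterraTail.snd_nhds.neg

end IsVolterraSolution

structure IsCoeffMajorant (h V b : ℝ → ℝ) : Prop where
  admissibleWeight : AdmissibleWeight h
  continuous_left : Continuous V
  continuous_right : Continuous b
  abs_add_abs_le : ∀ x, |V x| + |b x| ≤ h x

/-- `W` in the weighted space stands for the pair `U = e^{2η} W`, so `‖W‖` is the weighted norm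
of `U`. -/
noncomputable def ofWeighted (h : ℝ → ℝ) (W : ℝ →ᵇ ℝ × ℝ) (w : ℝ) : ℝ × ℝ := weight h w • W w

theorem ofWeighted_sub (h : ℝ → ℝ) (W W' : ℝ →ᵇ ℝ × ℝ) :
    ofWeighted h (W - W') = ofWeighted h W - ofWeighted h W' := by
  ext1 w
  simp only [ofWeighted, BoundedContinuousFunction.coe_sub, Pi.sub_apply, smul_sub]

namespace IsCoeffMajorant

variable {h V b : ℝ → ℝ}

theorem continuous_rhs_ofWeighted (H : IsCoeffMajorant h V b) (W : ℝ →ᵇ ℝ × ℝ) :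
    Continuous (rhs V b (ofWeighted h W)) :=
  continuous_rhs H.continuous_left H.continuous_right
    (H.admissibleWeight.continuous_weight.smul W.continuous)

theorem abs_rhs_ofWeighted_le (H : IsCoeffMajorant h V b) (W : ℝ →ᵇ ℝ × ℝ) (w : ℝ) :
    |rhs V b (ofWeighted h W) w| ≤ ‖W‖ * (h w * weight h w) := by
  have h1 : |(W w).1| ≤ ‖W‖ := (norm_fst_le (W w)).trans (W.norm_coe_le_norm w)
  have h2 : |(W w).2| ≤ ‖W‖ := (norm_snd_le (W w)).trans (W.norm_coe_le_norm w)
  have hρ := (weight_pos h w).le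
  simp only [rhs, ofWeighted, Prod.smul_fst, Prod.smul_snd, smul_eq_mul]
  calc |V w * (weight h w * (W w).1) - b w * (weight h w * (W w).2)|
      ≤ |V w * (weight h w * (W w).1)| + |b w * (weight h w * (W w).2)| := abs_sub _ _
    _ = |V w| * (weight h w * |(W w).1|) + |b w| * (weight h w * |(W w).2|) := by
        rw [abs_mul, abs_mul, abs_mul, abs_mul, abs_of_nonneg hρ]
    _ ≤ |V w| * (weight h w * ‖W‖) + |b w| * (weight h w * ‖W‖) := by gcongr
    _ ≤ h w * (weight h w * ‖W‖) := by
        rw [← add_mul]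
        exact mul_le_mul_of_nonneg_right (H.abs_add_abs_le w) (by positivity)
    _ = ‖W‖ * (h w * weight h w) := by ring

theorem integrableOn_and_abs_integral_rhs_mul_le (H : IsCoeffMajorant h V b)
    (W : ℝ →ᵇ ℝ × ℝ) {k : ℝ → ℝ} {y : ℝ} (hk : Continuous k)
    (hkb : ∀ w > y, |k w| ≤ w + 1 - y) :
    IntegrableOn (fun w => rhs V b (ofWeighted h W) w * k w) (Ioi y) ∧
      |∫ w in Ioi y, rhs V b (ofWeighted h W) w * k w| ≤ ‖W‖ * ((weight h y - 1) / 2) :=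
  H.admissibleWeight.integrableOn_and_abs_integral_le (H.continuous_rhs_ofWeighted W) hk
    (norm_nonneg W) (H.abs_rhs_ofWeighted_le W) hkb

theorem integrableOn_rhs_and_abs_integral_le (H : IsCoeffMajorant h V b) (W : ℝ →ᵇ ℝ × ℝ)
    (y : ℝ) :
    IntegrableOn (rhs V b (ofWeighted h W)) (Ioi y) ∧
      |∫ w in Ioi y, rhs V b (ofWeighted h W) w| ≤ ‖W‖ * ((weight h y - 1) / 2) := by
  simpa using H.integrableOn_and_abs_integral_rhs_mul_le W (k := fun _ => 1) continuous_const
    fun w hw => by simp; linarith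

theorem integrableOn_rhs_mul_sub_and_abs_integral_le (H : IsCoeffMajorant h V b)
    (W : ℝ →ᵇ ℝ × ℝ) (y : ℝ) :
    IntegrableOn (fun w => rhs V b (ofWeighted h W) w * (y - w)) (Ioi y) ∧
      |∫ w in Ioi y, rhs V b (ofWeighted h W) w * (y - w)| ≤ ‖W‖ * ((weight h y - 1) / 2) :=
  H.integrableOn_and_abs_integral_rhs_mul_le W (by fun_prop) fun w hw => by
    rw [abs_of_neg (by linarith)]
    linarith

theorem tailIntegrable_rhs_ofWeighted (H : IsCoeffMajorant h V b) (W : ℝ →ᵇ ℝ × ℝ) :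
    TailIntegrable (rhs V b (ofWeighted h W)) :=
  ⟨fun a => (H.integrableOn_rhs_and_abs_integral_le W a).1,
    fun a => (H.integrableOn_rhs_mul_sub_and_abs_integral_le W a).1⟩

theorem norm_volterraTail_le (H : IsCoeffMajorant h V b) (W : ℝ →ᵇ ℝ × ℝ) (y : ℝ) :
    ‖volterraTail (rhs V b (ofWeighted h W)) y‖ ≤ ‖W‖ * ((weight h y - 1) / 2) :=
  max_le (H.integrableOn_rhs_mul_sub_and_abs_integral_le W y).2
    (H.integrableOn_rhs_and_abs_integral_le W y).2

theorem norm_inv_weight_smul_volterraTail_le (H : IsCoeffMajorant h V b) (W : ℝ →ᵇ ℝ × ℝ)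
    (y : ℝ) : ‖(weight h y)⁻¹ • volterraTail (rhs V b (ofWeighted h W)) y‖ ≤ ‖W‖ / 2 := by
  have hρ := weight_pos h y
  rw [norm_smul, norm_inv, norm_of_nonneg hρ.le, inv_mul_le_iff₀ hρ]
  refine (H.norm_volterraTail_le W y).trans ?_
  nlinarith [norm_nonneg W]

theorem norm_weightedVolterra_le (H : IsCoeffMajorant h V b) (W : ℝ →ᵇ ℝ × ℝ) (y : ℝ) :
    ‖(weight h y)⁻¹ • ((1, 0) - volterraTail (rhs V b (ofWeighted h W)) y)‖ ≤ 1 + ‖W‖ / 2 := by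
  have hρ := H.admissibleWeight.one_le_weight y
  rw [smul_sub]
  refine (norm_sub_le _ _).trans (add_le_add ?_ (H.norm_inv_weight_smul_volterraTail_le W y))
  rw [norm_smul, norm_inv, norm_of_nonneg (by linarith)]
  simpa using inv_le_one_of_one_le₀ hρ

noncomputable def weightedVolterra (H : IsCoeffMajorant h V b) (W : ℝ →ᵇ ℝ × ℝ) :
    ℝ →ᵇ ℝ × ℝ :=
  .ofNormedAddCommGroup
    (fun y => (weight h y)⁻¹ • ((1, 0) - volterraTail (rhs V b (ofWeighted h W)) y))
    ((H.admissibleWeight.continuous_weight.inv₀ fun y => (weight_pos h y).ne').smul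
      (continuous_const.sub ((H.tailIntegrable_rhs_ofWeighted W).continuous_volterraTail
        (H.continuous_rhs_ofWeighted W))))
    (1 + ‖W‖ / 2) (H.norm_weightedVolterra_le W)

theorem contractingWith_weightedVolterra (H : IsCoeffMajorant h V b) :
    ContractingWith 2⁻¹ H.weightedVolterra := by
  refine ⟨by norm_num, LipschitzWith.of_dist_le_mul fun W W' => ?_⟩
  rw [BoundedContinuousFunction.dist_le (by positivity)]
  intro y
  have hdiff : H.weightedVolterra W y - H.weightedVolterra W' y
      = (weight h y)⁻¹ • volterraTail (rhs V b (ofWeighted h (W' - W))) y := by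
    rw [ofWeighted_sub, rhs_sub, (H.tailIntegrable_rhs_ofWeighted W').volterraTail_sub
      (H.tailIntegrable_rhs_ofWeighted W)]
    simp only [weightedVolterra, BoundedContinuousFunction.coe_ofNormedAddCommGroup, ← smul_sub]
    congr 1
    abel
  rw [dist_eq_norm, hdiff, dist_comm, dist_eq_norm, NNReal.coe_inv, NNReal.coe_ofNat,
    ← div_eq_inv_mul]
  exact H.norm_inv_weight_smul_volterraTail_le (W' - W) y

theorem exists_isVolterraSolution (H : IsCoeffMajorant h V b) :
    ∃ U, IsVolterraSolution V b U := by
  set W := H.contractingWith_weightedVolterra.fixedPoint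
  have hfix : ∀ y, H.weightedVolterra W y = W y := fun y =>
    congrFun (congrArg DFunLike.coe H.contractingWith_weightedVolterra.fixedPoint_isFixedPt) y
  refine ⟨ofWeighted h W, H.admissibleWeight.continuous_weight.smul W.continuous,
    H.tailIntegrable_rhs_ofWeighted W, fun y => ?_, ?_⟩
  · exact ((inv_smul_eq_iff₀ (weight_pos h y).ne').1 (hfix y)).symm
  · refine squeeze_zero_norm (H.norm_volterraTail_le W) ?_
    simpa using (H.admissibleWeight.tendsto_weight.sub_const 1).div_const 2 |>.const_mul ‖W‖

end IsCoeffMajorant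


theorem isCoeffMajorant_of_integrable_sqrt {V b : ℝ → ℝ} (hV : Continuous V) (hb : Continuous b)
    (hVint : Integrable fun y => √(1 + y ^ 2) * V y)
    (hbint : Integrable fun y => √(1 + y ^ 2) * b y) :
    IsCoeffMajorant (fun x => |V x| + |b x|) V b := by
  refine ⟨⟨by fun_prop, fun x => by positivity, ?_⟩, hV, hb, fun _ => le_rfl⟩
  refine ((hVint.norm.add hbint.norm).const_mul 2).mono' (by fun_prop) (ae_of_all _ fun x => ?_)
  simp only [norm_mul, Real.norm_eq_abs, abs_of_nonneg (sqrt_nonneg _),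
    abs_of_nonneg (show 0 ≤ |V x| + |b x| by positivity),
    abs_of_nonneg (show 0 ≤ 1 + |x| by positivity)]
  calc (1 + |x|) * (|V x| + |b x|) ≤ 2 * √(1 + x ^ 2) * (|V x| + |b x|) :=
        mul_le_mul_of_nonneg_right (one_add_abs_le_two_mul_sqrt x) (by positivity)
    _ = 2 * (√(1 + x ^ 2) * |V x| + √(1 + x ^ 2) * |b x|) := by ring

end Jost

/-- threshold Jost solution: if `(1+y²)^{1/2} V` and
`(1+y²)^{1/2} b` are integrable, there is a C² solution of `Y'' + b Y' = V Y`
with `Y → 1`, `Y' → 0` at `+∞`, satisfying the stated integral equations. -/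
theorem stmt13 (V b : ℝ → ℝ) (hV : Continuous V) (hb : Continuous b)
    (hVint : Integrable (fun y => Real.sqrt (1 + y ^ 2) * V y))
    (hbint : Integrable (fun y => Real.sqrt (1 + y ^ 2) * b y)) :
    ∃ Y : ℝ → ℝ, ContDiff ℝ 2 Y ∧
      (∀ y, deriv (deriv Y) y + b y * deriv Y y = V y * Y y) ∧
      Tendsto Y atTop (nhds 1) ∧
      Tendsto (deriv Y) atTop (nhds 0) ∧
      (∀ y, Y y = 1 - ∫ w in Ioi y, (V w * Y w - b w * deriv Y w) * (y - w)) ∧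
      (∀ y, deriv Y y = -∫ w in Ioi y, (V w * Y w - b w * deriv Y w)) := by
  obtain ⟨U, hU⟩ :=
    (Jost.isCoeffMajorant_of_integrable_sqrt hV hb hVint hbint).exists_isVolterraSolution
  have hY := hU.hasDerivAt_fst hV hb
  have hY' := hU.hasDerivAt_snd hV hb
  have hdY : deriv (fun t => (U t).1) = fun t => (U t).2 := funext fun y => (hY y).deriv
  have hdY' : deriv (fun t => (U t).2) = Jost.rhs V b U := funext fun y => (hY' y).deriv
  refine ⟨fun t => (U t).1,
    contDiff_two_of_hasDerivAt hY hY' (Jost.continuous_rhs hV hb hU.continuous), fun y => ?_,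
    hU.tendsto_fst, hdY ▸ hU.tendsto_snd, fun y => ?_, fun y => ?_⟩
  · rw [hdY, hdY', Jost.rhs]
    ring
  · rw [hdY]
    exact hU.fst_eq y
  · rw [hdY]
    exact hU.snd_eq y
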